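/- arXiv:0810.0862 — 4 statements merged into one kernel-verified Lean document; each statement's English description precedes it below -/
import Mathlib

section
/- The operator δ on C⁺(G) defined by δ(φ)(K,S) = ∑_{w∈S} [ U^{q(K,S)−q(K,S−w)}·φ(K,S−w) + U^{q(K,S)−q(K+2E_w,S−w)}·φ(K+2E_w,S−w) ] satisfies δ² = 0, so (C⁺(G),δ) is a chain complex of 𝔽[U]-modules. -/
/-!
Common setup: the lattice cohomology complex of a weighted graph
(Némethi; J. Greene, "A surgery triangle for lattice cohomology").

A finite graph `G` with integer weights on vertices and signs on (multi-)edges is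
encoded by its symmetric incidence data `M : V → V → ℤ`: for `u ≠ w` the entry
`M u w` is the signed number of edges joining `u` and `w`, and `M u u = m(u)` is
the weight of `u`.  This is exactly the data of the intersection pairing `(·,·)`
on `L(G) = ℤ⟨E_u : u ∈ V⟩`, via `M u w = (E_u, E_w)`.
-/

noncomputable section

open Function

/-- A graph with integer vertex weights and signed multi-edges, encoded by the
symmetric pairing data `M u w = (E_u, E_w)` on `L(G)`. -/
structure WGraph (V : Type*) where
  M : V → V → ℤ
  symm : ∀ u w, M u w = M w u

variable {V : Type*} [Fintype V] [DecidableEq V]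

/-- Evaluation of `K ∈ Hom(L(G), ℤ)` (recorded by its components `K u = K(E_u)`)
on a lattice vector `x = ∑ x_u E_u ∈ L(G)`. -/
def evalK (K x : V → ℤ) : ℤ := ∑ u, K u * x u

/-- `E_T = ∑_{j ∈ T} E_j ∈ L(G)`. -/
def eVec (T : Finset V) : V → ℤ := fun u => if u ∈ T then 1 else 0

/-- Splitting a sum over `V` at a vertex `v`. -/
theorem sum_split (v : V) (f : V → ℤ) :
    ∑ u, f u = f v + ∑ u : {u : V // u ≠ v}, f u.1 := by
  rw [Fintype.sum_eq_add_sum_compl v f]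
  congr 1
  exact Finset.sum_subtype _ (fun x => by simp) f

namespace WGraph

/-- The symmetric bilinear pairing `(x, y)` on `L(G)`. -/
def pair (G : WGraph V) (x y : V → ℤ) : ℤ := ∑ u, ∑ w, G.M u w * x u * y w

/-- `K ∈ Hom(L(G),ℤ)` is characteristic: `(K,x) ≡ (x,x) (mod 2)` for all `x ∈ L(G)`. -/
def IsChar (G : WGraph V) (K : V → ℤ) : Prop :=
  ∀ x : V → ℤ, evalK K x ≡ G.pair x x [ZMOD 2]

/-- The set `Char(G)` of characteristic vectors, as a type. -/
def Ch (G : WGraph V) : Type _ := {K : V → ℤ // G.IsChar K}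

/-- `K + 2x ∈ Hom(L(G),ℤ)`, for `K ∈ Hom(L(G),ℤ)` and `x ∈ L(G)` (a lattice vector
is viewed in `Hom(L(G),ℤ)` via the pairing). -/
def chAdd (G : WGraph V) (K x : V → ℤ) : V → ℤ := fun u => K u + 2 * G.pair x (eVec {u})

/-- The difference `q(K + 2x) − q(K) = −((K,x) + (x,x))/2`, where `q(y) = −(y,y)/8`;
it is an integer whenever `K` is characteristic. -/
def qdiff (G : WGraph V) (K x : V → ℤ) : ℤ := (-(evalK K x + G.pair x x)) / 2

/-- The difference `q(K,S) − q(K) = max { q(K + 2E_T) − q(K) : T ⊆ S }`, where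
`q(K,S) = max { q(K + 2 ∑_{j∈T} E_j) : T ⊆ S }`. -/
def qrel (G : WGraph V) (K : V → ℤ) (S : Finset V) : ℤ :=
  S.powerset.sup' (Finset.powerset_nonempty S) fun T => G.qdiff K (eVec T)

/-- `G₊₁(v)`: increase the weight `m(v)` of the vertex `v` by one. -/
def bump (G : WGraph V) (v : V) : WGraph V where
  M u w := if u = v ∧ w = v then G.M u w + 1 else G.M u w
  symm u w := by
    have h := G.symm u w
    by_cases hu : u = v <;> by_cases hw : w = v <;> simp [hu, hw, h] <;>
      exact G.symm _ _

/-- `G − v`: delete the vertex `v` and all incident edges. -/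
def delete (G : WGraph V) (v : V) : WGraph {u : V // u ≠ v} where
  M u w := G.M u.1 w.1
  symm u w := G.symm u.1 w.1

theorem evalK_update (L y : V → ℤ) (v : V) (c : ℤ) :
    evalK (Function.update L v (L v + c)) y = evalK L y + c * y v := by
  unfold evalK
  have h : ∀ u, Function.update L v (L v + c) u * y u
      = L u * y u + (if u = v then c * y u else 0) := by
    intro u
    rcases eq_or_ne u v with hu | hu <;> simp [hu, Function.update] <;> ring
  simp only [h]
  rw [Finset.sum_add_distrib, Finset.sum_ite_eq' Finset.univ v (fun u => c * y u)]
  simp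

theorem IsChar.chAdd {G : WGraph V} {K : V → ℤ} (h : G.IsChar K) (x : V → ℤ) :
    G.IsChar (G.chAdd K x) := by
  intro y
  have key : evalK (G.chAdd K x) y
      = evalK K y + 2 * ∑ u, G.pair x (eVec {u}) * y u := by
    simp only [evalK, WGraph.chAdd, add_mul, mul_assoc]
    rw [Finset.sum_add_distrib, ← Finset.mul_sum]
  have hy := h y
  simp only [Int.ModEq] at hy ⊢
  rw [key]
  omega

theorem pair_bump (G : WGraph V) (v : V) (y : V → ℤ) :
    (G.bump v).pair y y = G.pair y y + y v * y v := by
  unfold pair bump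
  have hu : ∀ u w : V, ((if u = v ∧ w = v then G.M u w + 1 else G.M u w) * y u * y w)
      = G.M u w * y u * y w + (if u = v ∧ w = v then y u * y w else 0) := by
    intro u w
    rcases eq_or_ne u v with h | h <;> rcases eq_or_ne w v with h' | h' <;>
      simp [h, h'] <;> ring
  simp only [hu, Finset.sum_add_distrib]
  congr 1
  have hin : ∀ u : V, (∑ w, if u = v ∧ w = v then y u * y w else 0)
      = if u = v then y u * y v else 0 := by
    intro u
    rcases eq_or_ne u v with h | h
    · simp [h, Finset.sum_ite_eq' Finset.univ v (fun w => y v * y w)]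
    · simp [h]
  rw [Finset.sum_congr rfl (fun u _ => hin u),
    Finset.sum_ite_eq' Finset.univ v (fun u => y u * y v)]
  simp

theorem IsChar.bumpUpdate {G : WGraph V} {L : V → ℤ} (h : G.IsChar L) (v : V) (i : ℤ) :
    (G.bump v).IsChar (Function.update L v (L v + (2 * i + 1))) := by
  intro y
  have h1 := evalK_update L y v (2 * i + 1)
  have h2 := pair_bump G v y
  have hy := h y
  obtain ⟨k, hk⟩ := Int.even_mul_succ_self (y v - 1)
  have hk' : y v * y v - y v = 2 * k := by
    have h5 : (y v - 1) * (y v - 1 + 1) = y v * y v - y v := by ring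
    omega
  have h3 : (2 * i + 1) * y v = 2 * (i * y v) + y v := by ring
  simp only [Int.ModEq] at hy ⊢
  rw [h1, h2, h3]
  omega

theorem IsChar.evenUpdate {G : WGraph V} {L : V → ℤ} (h : G.IsChar L) (v : V) (k : ℤ) :
    G.IsChar (Function.update L v (L v + 2 * k)) := by
  intro y
  have h1 := evalK_update L y v (2 * k)
  have hy := h y
  have h3 : 2 * k * y v = 2 * (k * y v) := by ring
  simp only [Int.ModEq] at hy ⊢
  rw [h1, h3]
  omega

end WGraph

/-- Extension of `K ∈ Hom(L(G−v),ℤ)` to `Hom(L(G),ℤ)` by the value `t` at `v`: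
the vector denoted `(K, t)`. -/
def extV (v : V) (K : {u : V // u ≠ v} → ℤ) (t : ℤ) : V → ℤ :=
  fun u => if h : u = v then t else K ⟨u, h⟩

namespace WGraph

theorem IsChar.extChar {G : WGraph V} {v : V} {K : {u : V // u ≠ v} → ℤ}
    (h : (G.delete v).IsChar K) {t : ℤ} (ht : t ≡ G.M v v [ZMOD 2]) :
    G.IsChar (extV v K t) := by
  intro y
  have h1 : evalK (extV v K t) y = t * y v + evalK K (fun u => y u.1) := by
    unfold evalK
    rw [sum_split v (fun u => extV v K t u * y u)]
    congr 1
    · simp [extV]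
    · exact Finset.sum_congr rfl fun u _ => by simp [extV, u.2]
  have h2 : G.pair y y = (G.delete v).pair (fun u => y u.1) (fun u => y u.1)
      + G.M v v * (y v * y v)
      + 2 * ∑ u : {u : V // u ≠ v}, G.M v u.1 * y v * y u.1 := by
    have step1 : G.pair y y = (∑ w, G.M v w * y v * y w)
        + ∑ u : {u : V // u ≠ v}, ∑ w, G.M u.1 w * y u.1 * y w :=
      sum_split v (fun u => ∑ w, G.M u w * y u * y w)
    have step2 : (∑ w, G.M v w * y v * y w)
        = G.M v v * y v * y v + ∑ w : {w : V // w ≠ v}, G.M v w.1 * y v * y w.1 :=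
      sum_split v _
    have step3 : ∀ u : {u : V // u ≠ v}, (∑ w, G.M u.1 w * y u.1 * y w)
        = G.M u.1 v * y u.1 * y v + ∑ w : {w : V // w ≠ v}, G.M u.1 w.1 * y u.1 * y w.1 :=
      fun u => sum_split v _
    have step4 : (G.delete v).pair (fun u => y u.1) (fun u => y u.1)
        = ∑ u : {u : V // u ≠ v}, ∑ w : {w : V // w ≠ v}, G.M u.1 w.1 * y u.1 * y w.1 := rfl
    have hc : (∑ u : {u : V // u ≠ v}, G.M u.1 v * y u.1 * y v)
        = ∑ u : {u : V // u ≠ v}, G.M v u.1 * y v * y u.1 := by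
      refine Finset.sum_congr rfl fun u _ => ?_
      rw [G.symm u.1 v]; ring
    rw [step1, step2, Finset.sum_congr rfl (fun u _ => step3 u),
      Finset.sum_add_distrib, hc, step4]
    ring
  have hy := h (fun u => y u.1)
  obtain ⟨k, hk⟩ := Int.even_mul_succ_self (y v - 1)
  have hk' : y v * y v - y v = 2 * k := by
    have h5 : (y v - 1) * (y v - 1 + 1) = y v * y v - y v := by ring
    omega
  obtain ⟨a, ha⟩ : (2:ℤ) ∣ t - G.M v v := Int.ModEq.dvd ht.symm
  have e1 : t * y v = G.M v v * y v + 2 * (a * y v) := by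
    have h6 : t = G.M v v + 2 * a := by omega
    rw [h6]; ring
  have e2 : G.M v v * (y v * y v) = G.M v v * y v + 2 * (G.M v v * k) := by
    have h7 : y v * y v = y v + 2 * k := by omega
    rw [h7]; ring
  simp only [Int.ModEq] at hy ⊢
  rw [h1, h2, e1, e2]
  omega

variable {G : WGraph V}

/-- `K + 2x` as a characteristic vector. -/
def Ch.add (K : G.Ch) (x : V → ℤ) : G.Ch := ⟨G.chAdd K.1 x, K.2.chAdd x⟩

/-- For `K = (K', t) ∈ Char(G)`, the characteristic vector
`(K', t + 2i + 1) ∈ Char(G₊₁(v))`. -/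
def Ch.bumpSh (K : G.Ch) (v : V) (i : ℤ) : (G.bump v).Ch :=
  ⟨Function.update K.1 v (K.1 v + (2 * i + 1)), K.2.bumpUpdate v i⟩

/-- For `K = (K', t) ∈ Char(G)`, the characteristic vector `(K', t + 2k) ∈ Char(G)`. -/
def Ch.evenSh (K : G.Ch) (v : V) (k : ℤ) : G.Ch :=
  ⟨Function.update K.1 v (K.1 v + 2 * k), K.2.evenUpdate v k⟩

/-- For `K ∈ Char(G−v)`, the characteristic vector `(K, m(v) + 2i) ∈ Char(G)`. -/
def Ch.extend {v : V} (K : (G.delete v).Ch) (i : ℤ) : G.Ch :=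
  ⟨extV v K.1 (G.M v v + 2 * i),
    K.2.extChar (by show (G.M v v + 2 * i) % 2 = G.M v v % 2; omega)⟩

end WGraph

/-- `𝒯⁺₀ = 𝔽[U,U⁻¹]/(U·𝔽[U])` over `𝔽 = ℤ/2ℤ`: the coefficient at `d ∈ ℕ` records
the coefficient of `U^{−d}`. -/
def Tplus : Type := ℕ →₀ ZMod 2

instance : AddCommGroup Tplus := inferInstanceAs (AddCommGroup (ℕ →₀ ZMod 2))
instance : Module (ZMod 2) Tplus := inferInstanceAs (Module (ZMod 2) (ℕ →₀ ZMod 2))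

/-- The element `U^{-m}` of `𝒯⁺₀`. -/
def Um (m : ℕ) : Tplus := (Finsupp.single m 1 : ℕ →₀ ZMod 2)

/-- Multiplication by `U^e` on `𝒯⁺₀`: `U^e · U^{−d} = U^{−(d−e)}` (which is `0` if `d < e`). -/
def Upow (e : ℤ) (f : Tplus) : Tplus :=
  (Finsupp.comapDomain (fun d : ℕ => (d : ℤ) + e)
    (Finsupp.embDomain ⟨(Nat.cast : ℕ → ℤ), Nat.cast_injective⟩ (f : ℕ →₀ ZMod 2))
    (fun a _ b _ hab => Nat.cast_injective (add_right_cancel hab)) : ℕ →₀ ZMod 2)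

theorem Upow_zero (e : ℤ) : Upow e 0 = 0 := by
  show (Finsupp.comapDomain _ (Finsupp.embDomain _ (0 : ℕ →₀ ZMod 2)) _ : ℕ →₀ ZMod 2)
    = (0 : ℕ →₀ ZMod 2)
  ext d
  simp

/-- `C⁺(G)`: the `𝔽[U]`-module of finitely supported maps `Char(G) × 𝒫(V) → 𝒯⁺₀`. -/
abbrev Cplus (G : WGraph V) : Type _ := (G.Ch × Finset V) →₀ Tplus

/-- The action of (multiplication by) `U` on `C⁺(G)`. -/
def UC (G : WGraph V) (φ : Cplus G) : Cplus G := Finsupp.mapRange (Upow 1) (Upow_zero 1) φ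

/-- `U^{−m} · (K,S)^∨`: the element of `C⁺(G)` supported at the single pair `(K,S)`
with value `U^{−m}`. -/
def dual {G : WGraph V} (p : G.Ch × Finset V) (m : ℕ) : Cplus G :=
  Finsupp.single p (Um m)

/-- The exponent `q(K,S) − q(K, S−w)`. -/
def dExp₁ (G : WGraph V) (K : V → ℤ) (S : Finset V) (w : V) : ℤ :=
  G.qrel K S - G.qrel K (S.erase w)

/-- The exponent `q(K,S) − q(K + 2E_w, S−w)`. -/
def dExp₂ (G : WGraph V) (K : V → ℤ) (S : Finset V) (w : V) : ℤ :=
  G.qrel K S - (G.qdiff K (eVec {w}) + G.qrel (G.chAdd K (eVec {w})) (S.erase w))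

/-- `δ` is the operator on `C⁺(G)` given by
`δ(φ)(K,S) = ∑_{w∈S} [U^{q(K,S)−q(K,S−w)}·φ(K,S−w) + U^{q(K,S)−q(K+2E_w,S−w)}·φ(K+2E_w,S−w)]`. -/
def IsDelta (G : WGraph V) (δ : Cplus G → Cplus G) : Prop :=
  ∀ (φ : Cplus G) (K : G.Ch) (S : Finset V),
    δ φ (K, S) = ∑ w ∈ S,
      (Upow (dExp₁ G K.1 S w) (φ (K, S.erase w))
        + Upow (dExp₂ G K.1 S w) (φ (K.add (eVec {w}), S.erase w)))

/-- The exponent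
`c(i,(K,t),S) = [q((K,t),S) − q(K,t)] − [q'((K,t+2i+1),S) − q'(K,t+2i+1)] + i(i+1)/2`. -/
def cExp (G : WGraph V) (v : V) (i : ℤ) (K : G.Ch) (S : Finset V) : ℤ :=
  G.qrel K.1 S - (G.bump v).qrel (K.bumpSh v i).1 S + i * (i + 1) / 2

/-- `A` is the map `C⁺(G₊₁(v)) → C⁺(G)` given by
`A(φ)((K,t),S) = ∑_{i∈ℤ} U^{c(i,(K,t),S)} · φ((K,t+2i+1),S)`. -/
def IsA (G : WGraph V) (v : V) (A : Cplus (G.bump v) → Cplus G) : Prop :=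
  ∀ (φ : Cplus (G.bump v)) (K : G.Ch) (S : Finset V),
    A φ (K, S) = ∑ᶠ i : ℤ, Upow (cExp G v i K S) (φ (K.bumpSh v i, S))

/-- A subset `S ⊆ V − v` viewed as a subset of `V`. -/
def liftS (v : V) (S : Finset {u : V // u ≠ v}) : Finset V :=
  S.map ⟨Subtype.val, Subtype.val_injective⟩

/-- `B` is the map `C⁺(G) → C⁺(G−v)` given by
`B(φ)(K,S) = ∑_{i∈ℤ} φ((K, m(v)+2i), S)`. -/
def IsB (G : WGraph V) (v : V) (B : Cplus G → Cplus (G.delete v)) : Prop :=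
  ∀ (φ : Cplus G) (K : (G.delete v).Ch) (S : Finset {u : V // u ≠ v}),
    B φ (K, S) = ∑ᶠ i : ℤ, φ (K.extend i, liftS v S)

/-- `r((K,t),S) = q((K,t),S−v) − q((K,t)+2E_v,S−v)` (for `v ∈ S`). -/
def rVal (G : WGraph V) (v : V) (K : G.Ch) (S : Finset V) : ℤ :=
  G.qrel K.1 (S.erase v)
    - (G.qdiff K.1 (eVec {v}) + G.qrel (G.chAdd K.1 (eVec {v})) (S.erase v))

/-- The lattice cohomology `ℍ⁺`: the homology of the complex `(C⁺, δ)`. -/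
abbrev Hlat {G : WGraph V} (δ : Cplus G →ₗ[ZMod 2] Cplus G) : Type _ :=
  LinearMap.ker δ ⧸ (LinearMap.range δ).comap (LinearMap.ker δ).subtype

/-- `𝒟₁ ⊆ C⁺(G)`: the `𝔽`-submodule generated by the `U^{−m}·((K,t),S)^∨` with `v ∈ S`. -/
def D1 (G : WGraph V) (v : V) : Submodule (ZMod 2) (Cplus G) :=
  Submodule.span (ZMod 2)
    {χ | ∃ (K : G.Ch) (S : Finset V) (m : ℕ), v ∈ S ∧ χ = dual (K, S) m}

/-- `𝒟₂ ⊆ C⁺(G)`: the `𝔽`-submodule generated by the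
`U^{−m}·[((K,t),S)^∨ + ((K,t+2),S)^∨]` with `v ∉ S`. -/
def D2 (G : WGraph V) (v : V) : Submodule (ZMod 2) (Cplus G) :=
  Submodule.span (ZMod 2)
    {χ | ∃ (K : G.Ch) (S : Finset V) (m : ℕ), v ∉ S ∧
      χ = dual (K, S) m + dual (K.evenSh v 1, S) m}


/-!
Expanding `δ² φ (K, S)` produces, for every ordered pair `w ≠ x` of elements of `S`, four terms
`U^e φ(K', S - w - x)` with `K' ∈ {K, K + 2E_x, K + 2E_w, K + 2E_w + 2E_x}`. The exponents
telescope to `q(K, S) - q(K', S - w - x)`, so the terms for `(w, x)` and `(x, w)` agree and cancel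
over `𝔽`. Composing the `U`-powers is legitimate because the exponents of `δ` are nonnegative.
-/

def Tplus.coeff (f : Tplus) : ℕ →₀ ZMod 2 := f

theorem Tplus.ext {f g : Tplus} (h : ∀ d, f.coeff d = g.coeff d) : f = g :=
  Finsupp.ext h

theorem Tplus.coeff_add (f g : Tplus) : (f + g).coeff = f.coeff + g.coeff := rfl

theorem coeff_Upow (e : ℤ) (f : Tplus) (d : ℕ) :
    (Upow e f).coeff d = if 0 ≤ (d : ℤ) + e then f.coeff ((d : ℤ) + e).toNat else 0 := by
  change Finsupp.embDomain ⟨(Nat.cast : ℕ → ℤ), Nat.cast_injective⟩ f.coeff ((d : ℤ) + e)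
    = _
  split_ifs with h
  · conv_lhs => rw [← Int.toNat_of_nonneg h]
    exact Finsupp.embDomain_apply_self _ _ _
  · refine Finsupp.embDomain_of_notMem_range _ _ _ ?_
    rintro ⟨n, hn⟩
    simp only [Function.Embedding.coeFn_mk] at hn
    omega

theorem Upow_add (e : ℤ) (f g : Tplus) : Upow e (f + g) = Upow e f + Upow e g := by
  refine Tplus.ext fun d => ?_
  simp only [Tplus.coeff_add, Finsupp.add_apply, coeff_Upow]
  split_ifs <;> simp

theorem Upow_sum {ι : Type*} (e : ℤ) (s : Finset ι) (f : ι → Tplus) :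
    Upow e (∑ i ∈ s, f i) = ∑ i ∈ s, Upow e (f i) :=
  map_sum (AddMonoidHom.mk' (Upow e) (Upow_add e)) f s

/-- `0 ≤ a` is needed: `U⁻¹ · (U · U⁰) = 0` in `𝒯⁺₀`. -/
theorem Upow_Upow {a b : ℤ} (ha : 0 ≤ a) (f : Tplus) : Upow a (Upow b f) = Upow (a + b) f := by
  refine Tplus.ext fun d => ?_
  rw [coeff_Upow, if_pos (by omega), coeff_Upow, coeff_Upow,
    show ((((d : ℤ) + a).toNat : ℕ) : ℤ) + b = (d : ℤ) + (a + b) by omega]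

theorem Finset.sum_sum_erase_eq_zero_of_comm {ι M : Type*} [DecidableEq ι] [AddCommGroup M]
    [Module (ZMod 2) M] (S : Finset ι) (F : ι → ι → M)
    (hF : ∀ w ∈ S, ∀ x ∈ S, w ≠ x → F w x = F x w) :
    ∑ w ∈ S, ∑ x ∈ S.erase w, F w x = 0 := by
  rw [Finset.sum_sigma']
  refine Finset.sum_involution (fun p _ => ⟨p.2, p.1⟩) ?_ ?_ ?_ fun _ _ => rfl
  · rintro ⟨w, x⟩ hp
    obtain ⟨hw, hxw, hx⟩ : w ∈ S ∧ x ≠ w ∧ x ∈ S := by simpa using hp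
    rw [hF w hw x hx hxw.symm]
    exact ZModModule.add_self _
  · rintro ⟨w, x⟩ hp _ h
    obtain ⟨-, hxw, -⟩ : w ∈ S ∧ x ≠ w ∧ x ∈ S := by simpa using hp
    exact hxw (congrArg Sigma.fst h)
  · rintro ⟨w, x⟩ hp
    obtain ⟨hw, hxw, hx⟩ : w ∈ S ∧ x ≠ w ∧ x ∈ S := by simpa using hp
    simpa using ⟨hx, hxw.symm, hw⟩

theorem evalK_add {V : Type*} [Fintype V] (K x y : V → ℤ) :
    evalK K (x + y) = evalK K x + evalK K y := by
  simp only [evalK, Pi.add_apply, mul_add, Finset.sum_add_distrib]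

theorem eVec_singleton_add {V : Type*} [DecidableEq V] {w : V} {T : Finset V} (hw : w ∉ T) :
    eVec {w} + eVec T = eVec (insert w T) := by
  funext u
  by_cases h : u = w
  · subst h; simp [eVec, hw]
  · simp [eVec, h]

namespace WGraph

variable {G : WGraph V}

theorem pair_comm {V : Type*} [Fintype V] (G : WGraph V) (x y : V → ℤ) :
    G.pair x y = G.pair y x := by
  unfold pair
  rw [Finset.sum_comm]
  refine Finset.sum_congr rfl fun u _ => Finset.sum_congr rfl fun w _ => ?_
  rw [G.symm w u]; ring

theorem pair_add_left {V : Type*} [Fintype V] (G : WGraph V) (x y z : V → ℤ) :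
    G.pair (x + y) z = G.pair x z + G.pair y z := by
  simp only [pair, Pi.add_apply, mul_add, add_mul, Finset.sum_add_distrib]

theorem pair_add_right {V : Type*} [Fintype V] (G : WGraph V) (x y z : V → ℤ) :
    G.pair x (y + z) = G.pair x y + G.pair x z := by
  rw [pair_comm, pair_add_left, pair_comm G y, pair_comm G z]

theorem sum_pair_eVec_singleton_mul (G : WGraph V) (x y : V → ℤ) :
    ∑ u, G.pair x (eVec {u}) * y u = G.pair x y := by
  simp only [pair, eVec, Finset.mem_singleton, mul_ite, mul_one, mul_zero,
    Finset.sum_ite_eq', Finset.mem_univ, if_true, Finset.sum_mul]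
  rw [Finset.sum_comm]

theorem evalK_chAdd (G : WGraph V) (K x y : V → ℤ) :
    evalK (G.chAdd K x) y = evalK K y + 2 * G.pair x y := by
  simp only [evalK, chAdd, add_mul, Finset.sum_add_distrib, mul_assoc, ← Finset.mul_sum,
    sum_pair_eVec_singleton_mul]

/-- The halvings in `qdiff` are exact because `K` is characteristic. -/
theorem qdiff_add {K : V → ℤ} (hK : G.IsChar K) (x y : V → ℤ) :
    G.qdiff K x + G.qdiff (G.chAdd K x) y = G.qdiff K (x + y) := by
  have hx := hK x
  have hy := hK.chAdd x y
  have hpair : G.pair (x + y) (x + y) = G.pair x x + 2 * G.pair x y + G.pair y y := by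
    rw [pair_add_left, pair_add_right, pair_add_right, pair_comm G y x]; ring
  rw [evalK_chAdd] at hy
  simp only [Int.ModEq] at hx hy
  simp only [qdiff, evalK_add, hpair, evalK_chAdd]
  omega

theorem Ch.val_add (K : G.Ch) (x : V → ℤ) : (K.add x).1 = G.chAdd K.1 x := rfl

theorem Ch.add_add_comm (K : G.Ch) (x y : V → ℤ) : (K.add x).add y = (K.add y).add x :=
  Subtype.ext <| funext fun u => by simp only [Ch.val_add, chAdd]; ring

theorem qrel_mono (K : V → ℤ) {S S' : Finset V} (h : S ⊆ S') : G.qrel K S ≤ G.qrel K S' :=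
  Finset.sup'_mono _ (Finset.powerset_mono.2 h) _

theorem qdiff_add_qrel_erase_le {K : V → ℤ} (hK : G.IsChar K) {S : Finset V} {w : V}
    (hw : w ∈ S) :
    G.qdiff K (eVec {w}) + G.qrel (G.chAdd K (eVec {w})) (S.erase w) ≤ G.qrel K S := by
  suffices G.qrel (G.chAdd K (eVec {w})) (S.erase w) ≤ G.qrel K S - G.qdiff K (eVec {w}) by
    omega
  refine Finset.sup'_le _ _ fun T hT => ?_
  have hTS : T ⊆ S.erase w := Finset.mem_powerset.1 hT
  have hwT : w ∉ T := fun h => (Finset.mem_erase.1 (hTS h)).1 rfl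
  have hcocycle := qdiff_add hK (eVec {w}) (eVec T)
  rw [eVec_singleton_add hwT] at hcocycle
  have hle : G.qdiff K (eVec (insert w T)) ≤ G.qrel K S :=
    Finset.le_sup' (fun T => G.qdiff K (eVec T)) <| Finset.mem_powerset.2 <|
      Finset.insert_subset hw (hTS.trans (Finset.erase_subset w S))
  omega

end WGraph

theorem dExp₁_nonneg (G : WGraph V) (K : V → ℤ) (S : Finset V) (w : V) :
    0 ≤ dExp₁ G K S w :=
  sub_nonneg.2 (G.qrel_mono K (S.erase_subset w))

theorem dExp₂_nonneg {G : WGraph V} {K : V → ℤ} (hK : G.IsChar K) {S : Finset V} {w : V}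
    (hw : w ∈ S) : 0 ≤ dExp₂ G K S w :=
  sub_nonneg.2 (G.qdiff_add_qrel_erase_le hK hw)

def deltaTerm {G : WGraph V} (φ : Cplus G) (K : G.Ch) (S : Finset V) (w : V) : Tplus :=
  Upow (dExp₁ G K.1 S w) (φ (K, S.erase w))
    + Upow (dExp₂ G K.1 S w) (φ (K.add (eVec {w}), S.erase w))

theorem IsDelta.apply {G : WGraph V} {δ : Cplus G → Cplus G} (hδ : IsDelta G δ) (φ : Cplus G)
    (K : G.Ch) (S : Finset V) : δ φ (K, S) = ∑ w ∈ S, deltaTerm φ K S w :=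
  hδ φ K S

/-- The exponents are written as `q(K, S) - q(K', S - w - x)`, which makes the symmetry in
`w` and `x` visible. -/
def deltaPairTerm {G : WGraph V} (φ : Cplus G) (K : G.Ch) (S : Finset V) (w x : V) : Tplus :=
  let S' := (S.erase w).erase x
  Upow (G.qrel K.1 S - G.qrel K.1 S') (φ (K, S'))
    + Upow (G.qrel K.1 S - (G.qdiff K.1 (eVec {x}) + G.qrel (K.add (eVec {x})).1 S'))
        (φ (K.add (eVec {x}), S'))
    + Upow (G.qrel K.1 S - (G.qdiff K.1 (eVec {w}) + G.qrel (K.add (eVec {w})).1 S'))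
        (φ (K.add (eVec {w}), S'))
    + Upow (G.qrel K.1 S - (G.qdiff K.1 (eVec {w} + eVec {x})
          + G.qrel ((K.add (eVec {w})).add (eVec {x})).1 S'))
        (φ ((K.add (eVec {w})).add (eVec {x}), S'))

theorem deltaPairTerm_comm {G : WGraph V} (φ : Cplus G) (K : G.Ch) (S : Finset V) (w x : V) :
    deltaPairTerm φ K S w x = deltaPairTerm φ K S x w := by
  simp only [deltaPairTerm]
  rw [Finset.erase_right_comm, WGraph.Ch.add_add_comm, add_comm (eVec {w})]
  abel

theorem IsDelta.deltaTerm_eq_sum_deltaPairTerm {G : WGraph V} {δ : Cplus G → Cplus G}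
    (hδ : IsDelta G δ) (φ : Cplus G) (K : G.Ch) {S : Finset V} {w : V} (hw : w ∈ S) :
    deltaTerm (δ φ) K S w = ∑ x ∈ S.erase w, deltaPairTerm φ K S w x := by
  have h₁ := dExp₁_nonneg G K.1 S w
  have h₂ := dExp₂_nonneg K.2 hw
  rw [deltaTerm, hδ.apply, hδ.apply, Upow_sum, Upow_sum, ← Finset.sum_add_distrib]
  refine Finset.sum_congr rfl fun x _ => ?_
  have hcocycle := WGraph.qdiff_add K.2 (eVec {w}) (eVec {x})
  simp only [deltaTerm, deltaPairTerm, Upow_add, Upow_Upow h₁, Upow_Upow h₂, ← add_assoc]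
  refine congrArg₂ (· + ·) (congrArg₂ (· + ·) (congrArg₂ (· + ·) ?_ ?_) ?_) ?_ <;>
    refine congrArg (Upow · _) ?_ <;>
    simp only [dExp₁, dExp₂, WGraph.Ch.val_add] at hcocycle ⊢ <;> omega

/-- The operator `δ` on `C⁺(G)` defined by
`δ(φ)(K,S) = ∑_{w∈S} [U^{q(K,S)−q(K,S−w)}·φ(K,S−w) + U^{q(K,S)−q(K+2E_w,S−w)}·φ(K+2E_w,S−w)]`
satisfies `δ² = 0`, so `(C⁺(G), δ)` is a chain complex of `𝔽[U]`-modules. -/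
theorem delta_squared_eq_zero (G : WGraph V) (δ : Cplus G → Cplus G) (hδ : IsDelta G δ) :
    ∀ φ : Cplus G, δ (δ φ) = 0 := by
  intro φ
  ext ⟨K, S⟩
  calc δ (δ φ) (K, S) = ∑ w ∈ S, ∑ x ∈ S.erase w, deltaPairTerm φ K S w x := by
        rw [hδ.apply]
        exact Finset.sum_congr rfl fun w hw => hδ.deltaTerm_eq_sum_deltaPairTerm φ K hw
    _ = 0 := Finset.sum_sum_erase_eq_zero_of_comm S _ fun w _ x _ _ =>
        deltaPairTerm_comm φ K S w x

end
end

section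
/- The map B : C⁺(G) → C⁺(G−v) defined by B(φ)(K,S) = ∑_{i∈ℤ} φ((K,m(v)+2i),S) (for K ∈ Char(G−v) and S ⊆ V−v) is an 𝔽[U]-equivariant chain map, i.e. δ∘B = B∘δ and B commutes with multiplication by U. -/
/-!
Common setup: the lattice cohomology complex of a weighted graph
(Némethi; J. Greene, "A surgery triangle for lattice cohomology").

A finite graph `G` with integer weights on vertices and signs on (multi-)edges is
encoded by its symmetric incidence data `M : V → V → ℤ`: for `u ≠ w` the entry
`M u w` is the signed number of edges joining `u` and `w`, and `M u u = m(u)` is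
the weight of `u`.  This is exactly the data of the intersection pairing `(·,·)`
on `L(G) = ℤ⟨E_u : u ∈ V⟩`, via `M u w = (E_u, E_w)`.
-/

noncomputable section

open Function

variable {V : Type*} [Fintype V] [DecidableEq V]

/-!
`B` sums over the fibre `{(K, t)}` of the restriction `Char(G) → Char(G − v)`. For
`S ⊆ V − v`, every `E_T` with `T ⊆ S` pairs trivially with the `v`-coordinate, so the
exponents of `δ` at `((K, t), S)` in `G` are those at `(K, S)` in `G − v`. The vertex `v`
only shows up through `(K, t) + 2E_w = (K + 2E_w, t + 2(E_w, E_v))`, which shifts the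
fibre index by `(E_w, E_v)` and is absorbed by reindexing the sum over the fibre.
Linearity and `U`-equivariance hold because each coefficient of `B φ` is a finite sum of
coefficients of `φ`, and so commutes with every additive endomorphism of `𝒯⁺₀`.
-/

-- Agrees with `Upow e` by `rfl`.
def upowAddHom (e : ℤ) : Tplus →+ Tplus :=
  (Finsupp.comapDomain.addMonoidHom (f := fun d : ℕ => (d : ℤ) + e)
      fun _ _ h => Nat.cast_injective (add_right_cancel h)).comp
    (Finsupp.embDomain.addMonoidHom ⟨Nat.cast, Nat.cast_injective⟩)

theorem liftS_erase {W : Type*} [DecidableEq W] (v : W) (S : Finset {u : W // u ≠ v})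
    (w : {u : W // u ≠ v}) : (liftS v S).erase w.1 = liftS v (S.erase w) :=
  (Finset.map_erase _ S w).symm

theorem sum_liftS {W M : Type*} [AddCommMonoid M] (v : W) (S : Finset {u : W // u ≠ v})
    (f : W → M) : ∑ u ∈ liftS v S, f u = ∑ w ∈ S, f w.1 :=
  Finset.sum_map S _ f

theorem evalK_extV_zero (v : V) (L : V → ℤ) (x : {u : V // u ≠ v} → ℤ) :
    evalK L (extV v x 0) = evalK (fun u => L u.1) x := by
  rw [evalK, sum_split v]
  simp only [extV, dite_true, mul_zero, zero_add]
  exact Finset.sum_congr rfl fun u _ => by simp [u.2]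

namespace WGraph

theorem pair_extV_zero (G : WGraph V) (v : V) (x y : {u : V // u ≠ v} → ℤ) :
    G.pair (extV v x 0) (extV v y 0) = (G.delete v).pair x y := by
  rw [pair, sum_split v]
  simp only [extV, dite_true, mul_zero, zero_mul, Finset.sum_const_zero, zero_add]
  refine Finset.sum_congr rfl fun u _ => ?_
  rw [sum_split v]
  simp only [dite_true, mul_zero, zero_add]
  exact Finset.sum_congr rfl fun w _ => by simp [delete, u.2, w.2]

theorem qdiff_eVec_liftS (G : WGraph V) (v : V) (L : V → ℤ) (T : Finset {u : V // u ≠ v}) :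
    G.qdiff L (eVec (liftS v T)) = (G.delete v).qdiff (fun u => L u.1) (eVec T) := by
  have hT : eVec (liftS v T) = extV v (eVec T) 0 := by
    funext u
    by_cases hu : u = v
    · subst hu
      simp [eVec, extV, liftS]
    · simp [eVec, extV, liftS, hu]
  rw [hT, qdiff, qdiff, evalK_extV_zero, pair_extV_zero]

theorem qrel_liftS (G : WGraph V) (v : V) (L : V → ℤ) (S : Finset {u : V // u ≠ v}) :
    G.qrel L (liftS v S) = (G.delete v).qrel (fun u => L u.1) S := by
  rw [qrel, Finset.sup'_congr _ (by rw [liftS, Finset.map_eq_image, Finset.powerset_image])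
    (fun _ _ => rfl), Finset.sup'_image]
  refine Finset.sup'_congr _ rfl fun T _ => ?_
  rw [Function.comp_apply, ← Finset.map_eq_image, ← liftS, qdiff_eVec_liftS]

theorem pair_eVec_singleton (G : WGraph V) (a b : V) :
    G.pair (eVec {a}) (eVec {b}) = G.M a b := by
  simp [pair, eVec]

variable {G : WGraph V} {v : V}

theorem Ch.extend_injective (K : (G.delete v).Ch) :
    Injective fun i : ℤ => (K.extend i : G.Ch) := by
  intro i j h
  have hv := congrArg (fun L : G.Ch => L.1 v) h
  simp only [extend, extV, dite_true] at hv
  omega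

theorem Ch.extend_restrict (K : (G.delete v).Ch) (i : ℤ) :
    (fun u : {u : V // u ≠ v} => (K.extend i : G.Ch).1 u.1) = K.1 :=
  funext fun u => by simp [extend, extV, u.2]

theorem Ch.extend_add_eVec (K : (G.delete v).Ch) (i : ℤ) (w : {u : V // u ≠ v}) :
    (K.extend i : G.Ch).add (eVec {w.1}) = (K.add (eVec {w})).extend (i + G.M w.1 v) := by
  refine Subtype.ext (funext fun u => ?_)
  by_cases hu : u = v
  · subst hu
    simp only [add, extend, chAdd, extV, dite_true, pair_eVec_singleton]
    ring
  · simp only [add, extend, chAdd, extV, hu, dite_false, pair_eVec_singleton]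
    rfl

end WGraph

variable {G : WGraph V} {v : V}

theorem dExp₁_extend (K : (G.delete v).Ch) (i : ℤ) (S : Finset {u : V // u ≠ v})
    (w : {u : V // u ≠ v}) :
    dExp₁ G (K.extend i : G.Ch).1 (liftS v S) w.1 = dExp₁ (G.delete v) K.1 S w := by
  rw [dExp₁, dExp₁, liftS_erase, G.qrel_liftS, G.qrel_liftS, WGraph.Ch.extend_restrict]

theorem dExp₂_extend (K : (G.delete v).Ch) (i : ℤ) (S : Finset {u : V // u ≠ v})
    (w : {u : V // u ≠ v}) :
    dExp₂ G (K.extend i : G.Ch).1 (liftS v S) w.1 = dExp₂ (G.delete v) K.1 S w := by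
  have hadd : G.chAdd (K.extend i : G.Ch).1 (eVec {w.1})
      = ((K.add (eVec {w})).extend (i + G.M w.1 v) : G.Ch).1 :=
    congrArg Subtype.val (WGraph.Ch.extend_add_eVec K i w)
  have hw : ({w.1} : Finset V) = liftS v {w} := by simp [liftS]
  rw [dExp₂, dExp₂, liftS_erase, hadd, G.qrel_liftS, G.qrel_liftS, hw, G.qdiff_eVec_liftS,
    WGraph.Ch.extend_restrict, WGraph.Ch.extend_restrict (K.add (eVec {w}))]
  rfl

theorem IsDelta.apply_extend {δ : Cplus G → Cplus G} (hδ : IsDelta G δ) (φ : Cplus G)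
    (K : (G.delete v).Ch) (i : ℤ) (S : Finset {u : V // u ≠ v}) :
    δ φ (K.extend i, liftS v S) = ∑ w ∈ S,
      (Upow (dExp₁ (G.delete v) K.1 S w) (φ (K.extend i, liftS v (S.erase w)))
        + Upow (dExp₂ (G.delete v) K.1 S w)
          (φ ((K.add (eVec {w})).extend (i + G.M w.1 v), liftS v (S.erase w)))) := by
  rw [hδ, sum_liftS]
  refine Finset.sum_congr rfl fun w _ => ?_
  rw [dExp₁_extend, dExp₂_extend, WGraph.Ch.extend_add_eVec, liftS_erase]

theorem hasFiniteSupport_extend (φ : Cplus G) (K : (G.delete v).Ch) (T : Finset V) :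
    HasFiniteSupport fun i : ℤ => φ (K.extend i, T) :=
  φ.hasFiniteSupport.fun_comp_of_injective
    ((Prod.mk_left_injective T).comp (WGraph.Ch.extend_injective K))

namespace IsB

variable {B : Cplus G → Cplus (G.delete v)}

theorem finsum_map (hB : IsB G v B) (F : Tplus →+ Tplus) (φ : Cplus G)
    (K : (G.delete v).Ch) (S : Finset {u : V // u ≠ v}) :
    ∑ᶠ i : ℤ, F (φ (K.extend i, liftS v S)) = F (B φ (K, S)) := by
  rw [hB, F.map_finsum (hasFiniteSupport_extend φ K _)]

theorem finsum_upow_extend_add (hB : IsB G v B) (φ : Cplus G) (K : (G.delete v).Ch)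
    (S : Finset {u : V // u ≠ v}) (e c : ℤ) :
    ∑ᶠ i : ℤ, Upow e (φ (K.extend (i + c), liftS v S)) = Upow e (B φ (K, S)) :=
  (finsum_comp_equiv (Equiv.addRight c)).trans (hB.finsum_map (upowAddHom e) φ K S)

theorem isLinearMap (hB : IsB G v B) : IsLinearMap (ZMod 2) B where
  map_add φ ψ := by
    ext ⟨K, S⟩
    rw [Finsupp.add_apply, hB, hB, hB, ← finsum_add_distrib (hasFiniteSupport_extend φ K _)
      (hasFiniteSupport_extend ψ K _)]
    rfl
  map_smul c φ := by
    ext ⟨K, S⟩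
    rw [Finsupp.smul_apply, hB]
    exact hB.finsum_map (DistribSMul.toAddMonoidHom Tplus c) φ K S

theorem map_UC (hB : IsB G v B) (φ : Cplus G) : B (UC G φ) = UC (G.delete v) (B φ) := by
  ext ⟨K, S⟩
  rw [hB]
  exact hB.finsum_map (upowAddHom 1) φ K S

theorem map_delta (hB : IsB G v B) {δG : Cplus G → Cplus G} (hδG : IsDelta G δG)
    {δG'' : Cplus (G.delete v) → Cplus (G.delete v)} (hδG'' : IsDelta (G.delete v) δG'')
    (φ : Cplus G) : B (δG φ) = δG'' (B φ) := by
  ext ⟨K, S⟩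
  have hfin (K' : (G.delete v).Ch) (T : Finset V) (e c : ℤ) :
      HasFiniteSupport fun i : ℤ => Upow e (φ (K'.extend (i + c), T)) :=
    ((hasFiniteSupport_extend φ K' T).comp_of_injective (add_left_injective c)).fun_comp
      (Upow_zero e)
  have hfin₀ (T : Finset V) (e : ℤ) : HasFiniteSupport fun i : ℤ => Upow e (φ (K.extend i, T)) :=
    (hasFiniteSupport_extend φ K T).fun_comp (Upow_zero e)
  rw [hδG'', hB, finsum_congr (hδG.apply_extend φ K · S),
    finsum_sum_comm _ _ fun w _ => ?finite]
  case finite => exact (hfin₀ _ _).add (hfin _ _ _ _)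
  refine Finset.sum_congr rfl fun w _ => ?_
  rw [finsum_add_distrib (hfin₀ _ _) (hfin _ _ _ _), hB.finsum_upow_extend_add φ (K.add _)]
  simpa using hB.finsum_upow_extend_add φ K (S.erase w) _ 0

end IsB

/-- The map `B : C⁺(G) → C⁺(G−v)` defined by
`B(φ)(K,S) = ∑_{i∈ℤ} φ((K,m(v)+2i),S)` (for `K ∈ Char(G−v)` and `S ⊆ V−v`) is an
`𝔽[U]`-equivariant chain map, i.e. `δ∘B = B∘δ` and `B` commutes with multiplication by `U`. -/
theorem B_equivariant_chain_map (G : WGraph V) (v : V)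
    (δG : Cplus G → Cplus G) (hδG : IsDelta G δG)
    (δG'' : Cplus (G.delete v) → Cplus (G.delete v)) (hδG'' : IsDelta (G.delete v) δG'')
    (B : Cplus G → Cplus (G.delete v)) (hB : IsB G v B) :
    IsLinearMap (ZMod 2) B ∧ (∀ φ, B (UC G φ) = UC (G.delete v) (B φ)) ∧
      (∀ φ, δG'' (B φ) = B (δG φ)) :=
  ⟨hB.isLinearMap, hB.map_UC, fun φ => (hB.map_delta hδG hδG'' φ).symm⟩

end
end

section
/- If v ∉ S, then for every characteristic vector (K,t) of G and every i ∈ ℤ, q'((K,t+2i+1),S) − q'(K,t+2i+1) = q((K,t),S) − q(K,t), and consequently c(i,(K,t),S) = i(i+1)/2. -/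
/-!
Common setup: the lattice cohomology complex of a weighted graph
(Némethi; J. Greene, "A surgery triangle for lattice cohomology").

A finite graph `G` with integer weights on vertices and signs on (multi-)edges is
encoded by its symmetric incidence data `M : V → V → ℤ`: for `u ≠ w` the entry
`M u w` is the signed number of edges joining `u` and `w`, and `M u u = m(u)` is
the weight of `u`.  This is exactly the data of the intersection pairing `(·,·)`
on `L(G) = ℤ⟨E_u : u ∈ V⟩`, via `M u w = (E_u, E_w)`.
-/

noncomputable section

open Function

variable {V : Type*} [Fintype V] [DecidableEq V]

namespace WGraph

theorem evalK_update_of_eq_zero (L x : V → ℤ) {v : V} (hx : x v = 0) (a : ℤ) :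
    evalK (update L v a) x = evalK L x :=
  Finset.sum_congr rfl fun u _ => by
    rcases eq_or_ne u v with rfl | hu
    · simp [hx]
    · rw [update_of_ne hu]

theorem pair_bump_of_eq_zero (G : WGraph V) {v : V} {x : V → ℤ} (hx : x v = 0) :
    (G.bump v).pair x x = G.pair x x := by
  rw [pair_bump, hx, mul_zero, add_zero]

theorem qdiff_bump_update_of_eq_zero (G : WGraph V) (L : V → ℤ) {v : V} {x : V → ℤ}
    (hx : x v = 0) (a : ℤ) :
    (G.bump v).qdiff (update L v a) x = G.qdiff L x := by
  rw [qdiff, qdiff, evalK_update_of_eq_zero L x hx, pair_bump_of_eq_zero G hx]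

/-- Each `E_T` with `T ⊆ S` vanishes at `v ∉ S`, so it sees neither the new weight nor the new
value at `v`. -/
theorem qrel_bump_update_of_not_mem (G : WGraph V) (L : V → ℤ) {v : V} {S : Finset V}
    (hv : v ∉ S) (a : ℤ) :
    (G.bump v).qrel (update L v a) S = G.qrel L S :=
  Finset.sup'_congr _ rfl fun _ hT =>
    qdiff_bump_update_of_eq_zero G L (if_neg fun hvT => hv (Finset.mem_powerset.mp hT hvT)) a

end WGraph

/-- If `v ∉ S`, then for every characteristic vector `(K,t)` of `G` and
every `i ∈ ℤ`, `q'((K,t+2i+1),S) − q'(K,t+2i+1) = q((K,t),S) − q(K,t)`, and consequently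
`c(i,(K,t),S) = i(i+1)/2`. -/
theorem cExp_of_not_mem (G : WGraph V) (v : V) (S : Finset V) (hv : v ∉ S)
    (K : G.Ch) (i : ℤ) :
    (G.bump v).qrel (K.bumpSh v i).1 S = G.qrel K.1 S ∧
      cExp G v i K S = i * (i + 1) / 2 := by
  have hq : (G.bump v).qrel (K.bumpSh v i).1 S = G.qrel K.1 S :=
    G.qrel_bump_update_of_not_mem K.1 hv _
  exact ⟨hq, by rw [cExp, hq, sub_self, zero_add]⟩

end
end

section
/- For every characteristic vector (K,t) of G, every i ∈ ℤ, and every S ⊆ V, the exponent c(i,(K,t),S) is a nonnegative integer. -/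
/-!
Common setup: the lattice cohomology complex of a weighted graph
(Némethi; J. Greene, "A surgery triangle for lattice cohomology").

A finite graph `G` with integer weights on vertices and signs on (multi-)edges is
encoded by its symmetric incidence data `M : V → V → ℤ`: for `u ≠ w` the entry
`M u w` is the signed number of edges joining `u` and `w`, and `M u u = m(u)` is
the weight of `u`.  This is exactly the data of the intersection pairing `(·,·)`
on `L(G) = ℤ⟨E_u : u ∈ V⟩`, via `M u w = (E_u, E_w)`.
-/

noncomputable section

open Function

variable {V : Type*} [Fintype V] [DecidableEq V]

theorem Int.mul_succ_div_two_bounds (i : ℤ) :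
    0 ≤ i * (i + 1) / 2 ∧ -(i + 1) ≤ i * (i + 1) / 2 := by
  obtain ⟨k, hk⟩ := Int.even_mul_succ_self i
  have hdiv : i * (i + 1) / 2 = k := by omega
  rw [hdiv]
  constructor <;> nlinarith [sq_nonneg (2 * i + 1), sq_nonneg (2 * i + 3)]

theorem eVec_eq_zero_or_one {α : Type*} [DecidableEq α] (T : Finset α) (u : α) :
    eVec T u = 0 ∨ eVec T u = 1 := by
  unfold eVec
  split_ifs <;> simp

namespace WGraph

theorem qdiff_bump_update (G : WGraph V) (L : V → ℤ) (v : V) (i : ℤ) (T : Finset V) :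
    (G.bump v).qdiff (update L v (L v + (2 * i + 1))) (eVec T)
      = G.qdiff L (eVec T) - (i + 1) * eVec T v := by
  have hsq : eVec T v * eVec T v = eVec T v := by
    rcases eVec_eq_zero_or_one T v with h | h <;> rw [h] <;> norm_num
  unfold qdiff
  rw [evalK_update, pair_bump, hsq]
  have hsplit : -(evalK L (eVec T) + (2 * i + 1) * eVec T v
        + (G.pair (eVec T) (eVec T) + eVec T v))
      = -(evalK L (eVec T) + G.pair (eVec T) (eVec T)) + (-((i + 1) * eVec T v)) * 2 := by
    ring
  rw [hsplit, Int.add_mul_ediv_right _ _ two_ne_zero]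
  ring

theorem qrel_le_qrel_add (G H : WGraph V) (K L : V → ℤ) (S : Finset V) (c : ℤ)
    (h : ∀ T ⊆ S, H.qdiff L (eVec T) ≤ G.qdiff K (eVec T) + c) :
    H.qrel L S ≤ G.qrel K S + c := by
  unfold qrel
  refine Finset.sup'_le _ _ fun T hT => ?_
  have := Finset.le_sup' (fun T => G.qdiff K (eVec T)) hT
  linarith [h T (Finset.mem_powerset.mp hT)]

theorem qrel_bump_le (G : WGraph V) (v : V) (K : G.Ch) (i : ℤ) (S : Finset V) :
    (G.bump v).qrel (K.bumpSh v i).1 S ≤ G.qrel K.1 S + i * (i + 1) / 2 := by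
  refine qrel_le_qrel_add G _ _ _ S _ fun T _ => ?_
  rw [Ch.bumpSh, qdiff_bump_update]
  obtain ⟨htri_nonneg, htri_ge⟩ := Int.mul_succ_div_two_bounds i
  rcases eVec_eq_zero_or_one T v with hv | hv <;> rw [hv] <;> linarith

end WGraph

/-- For every characteristic vector `(K,t)` of `G`, every `i ∈ ℤ`, and
every `S ⊆ V`, the exponent `c(i,(K,t),S)` is a nonnegative integer. -/
theorem cExp_nonneg (G : WGraph V) (v : V) (K : G.Ch) (i : ℤ) (S : Finset V) :
    0 ≤ cExp G v i K S := by
  have := G.qrel_bump_le v K i S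
  unfold cExp
  linarith

end
end
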